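/- arXiv:1303.3173 — 3 statements merged into one kernel-verified Lean document; each statement's English description precedes it below -/
import Mathlib

section
/- Let R be a uniquely bleached local ring and let s ∈ R be central. A matrix A ∈ K_s(R) is quasipolar if and only if A is a unit of K_s(R), or A is quasinilpotent in K_s(R), or A is similar in K_s(R) to a diagonal matrix [[a,0],[0,b]] with a, b ∈ R. -/
/-!
A quasipolar `A` comes with an idempotent `p` commuting with `A`. If `p = 0` then `A` is a unit
and if `p = 1` it is quasinilpotent. Otherwise, `R` being local, `p` or `1 - p` is conjugate to
`diag 1 0`: the conjugating matrix is `diag 1 0 * p + diag 0 1 * (1 - p)`, invertible because its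
Schur complement is `1`. A matrix commuting with `diag 1 0` is diagonal, so `A` is similar to a
diagonal matrix.

Conversely quasipolarity is invariant under conjugation, and `diag a b` is quasipolar with
idempotent `diag (ε a) (ε b)`, where `ε = IsLocalRing.spectralIdempotent` is `0` on units and `1`
elsewhere. Unique bleachedness is what makes this idempotent commute with the commutant of
`diag a b` when exactly one of `a, b` is a unit, and what excludes nonzero idempotents whose
diagonal entries are both nonunits.
-/

/-- The generalized matrix ring `K_s(R)` with multiplier `s`. -/
@[ext]
structure GenMatrix (R : Type*) (s : R) where
  a : R
  b : R
  c : R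
  d : R

namespace GenMatrix

variable {R : Type*} [Ring R] {s : R}

instance : Add (GenMatrix R s) :=
  ⟨fun X Y => ⟨X.a + Y.a, X.b + Y.b, X.c + Y.c, X.d + Y.d⟩⟩
instance : Neg (GenMatrix R s) := ⟨fun X => ⟨-X.a, -X.b, -X.c, -X.d⟩⟩
instance : Zero (GenMatrix R s) := ⟨⟨0, 0, 0, 0⟩⟩
instance : One (GenMatrix R s) := ⟨⟨1, 0, 0, 1⟩⟩
instance : Mul (GenMatrix R s) :=
  ⟨fun X Y => ⟨X.a * Y.a + s * (X.b * Y.c), X.a * Y.b + X.b * Y.d,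
    X.c * Y.a + X.d * Y.c, s * (X.c * Y.b) + X.d * Y.d⟩⟩

@[simp] lemma add_a (X Y : GenMatrix R s) : (X + Y).a = X.a + Y.a := rfl
@[simp] lemma add_b (X Y : GenMatrix R s) : (X + Y).b = X.b + Y.b := rfl
@[simp] lemma add_c (X Y : GenMatrix R s) : (X + Y).c = X.c + Y.c := rfl
@[simp] lemma add_d (X Y : GenMatrix R s) : (X + Y).d = X.d + Y.d := rfl
@[simp] lemma neg_a (X : GenMatrix R s) : (-X).a = -X.a := rfl
@[simp] lemma neg_b (X : GenMatrix R s) : (-X).b = -X.b := rfl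
@[simp] lemma neg_c (X : GenMatrix R s) : (-X).c = -X.c := rfl
@[simp] lemma neg_d (X : GenMatrix R s) : (-X).d = -X.d := rfl
@[simp] lemma zero_a : (0 : GenMatrix R s).a = 0 := rfl
@[simp] lemma zero_b : (0 : GenMatrix R s).b = 0 := rfl
@[simp] lemma zero_c : (0 : GenMatrix R s).c = 0 := rfl
@[simp] lemma zero_d : (0 : GenMatrix R s).d = 0 := rfl
@[simp] lemma one_a : (1 : GenMatrix R s).a = 1 := rfl
@[simp] lemma one_b : (1 : GenMatrix R s).b = 0 := rfl
@[simp] lemma one_c : (1 : GenMatrix R s).c = 0 := rfl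
@[simp] lemma one_d : (1 : GenMatrix R s).d = 1 := rfl
@[simp] lemma mul_a (X Y : GenMatrix R s) : (X * Y).a = X.a * Y.a + s * (X.b * Y.c) := rfl
@[simp] lemma mul_b (X Y : GenMatrix R s) : (X * Y).b = X.a * Y.b + X.b * Y.d := rfl
@[simp] lemma mul_c (X Y : GenMatrix R s) : (X * Y).c = X.c * Y.a + X.d * Y.c := rfl
@[simp] lemma mul_d (X Y : GenMatrix R s) : (X * Y).d = s * (X.c * Y.b) + X.d * Y.d := rfl

instance : AddCommGroup (GenMatrix R s) where
  add_assoc X Y Z := by ext <;> simp [add_assoc]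
  zero_add X := by ext <;> simp
  add_zero X := by ext <;> simp
  add_comm X Y := by ext <;> simp [add_comm]
  neg_add_cancel X := by ext <;> simp
  nsmul := nsmulRec
  zsmul := zsmulRec

section Central

variable [Fact (s ∈ Set.center R)]

lemma scomm (r : R) : r * s = s * r := Semigroup.mem_center_iff.mp Fact.out r

lemma sshift (r t : R) : r * (s * t) = s * (r * t) := by
  rw [← mul_assoc, scomm (s := s), mul_assoc]

instance : Ring (GenMatrix R s) where
  __ := (inferInstance : AddCommGroup (GenMatrix R s))
  left_distrib X Y Z := by ext <;> simp [mul_add, add_mul] <;> abel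
  right_distrib X Y Z := by ext <;> simp [mul_add, add_mul] <;> abel
  zero_mul X := by ext <;> simp
  mul_zero X := by ext <;> simp
  mul_assoc X Y Z := by
    ext <;> simp only [mul_a, mul_b, mul_c, mul_d, mul_add, add_mul, mul_assoc, sshift] <;> abel
  one_mul X := by ext <;> simp
  mul_one X := by ext <;> simp

end Central

instance central_of_comm {R : Type*} [CommRing R] (s : R) : Fact (s ∈ Set.center R) :=
  ⟨by rw [Set.center_eq_univ]; trivial⟩

/-- `det_s` of a generalized matrix over a commutative ring. -/
def dets {R : Type*} {s : R} [CommRing R] (A : GenMatrix R s) : R :=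
  A.a * A.d - s * (A.b * A.c)

/-- The trace of a generalized matrix. -/
def tr {R : Type*} {s : R} [Ring R] (A : GenMatrix R s) : R := A.a + A.d

end GenMatrix

/-- An element `a` is quasinilpotent if `1 + a*x` is a unit for every `x` commuting with `a`. -/
def IsQuasinilpotent {R : Type*} [Ring R] (a : R) : Prop :=
  ∀ x : R, a * x = x * a → IsUnit (1 + a * x)

/-- An element `a` is quasipolar if there is an idempotent `p` in the double commutant of `a`
with `a + p` a unit and `a * p` quasinilpotent. -/
def IsQuasipolar {R : Type*} [Ring R] (a : R) : Prop :=
  ∃ p : R, IsIdempotentElem p ∧ (∀ y : R, y * a = a * y → p * y = y * p) ∧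
    IsUnit (a + p) ∧ IsQuasinilpotent (a * p)

/-- A ring is quasipolar if every element is quasipolar. -/
def IsQuasipolarRing (R : Type*) [Ring R] : Prop := ∀ a : R, IsQuasipolar a

/-- An element is strongly clean if it is the sum of an idempotent and a unit that commute. -/
def IsStronglyClean {R : Type*} [Ring R] (a : R) : Prop :=
  ∃ e u : R, IsIdempotentElem e ∧ IsUnit u ∧ a = e + u ∧ e * u = u * e

/-- A ring is strongly clean if every element is strongly clean. -/
def IsStronglyCleanRing (R : Type*) [Ring R] : Prop := ∀ a : R, IsStronglyClean a

/-- `a` is similar to `b` if `b = u⁻¹ * a * u` for some unit `u`. -/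
def IsSimilar {R : Type*} [Ring R] (a b : R) : Prop :=
  ∃ u : Rˣ, b = ↑u⁻¹ * a * ↑u

/-- The Jacobson radical of a ring: the intersection of all maximal left ideals. -/
def JacobsonRadical (R : Type*) [Ring R] : Ideal R := Ideal.jacobson ⊥


/-- A local ring is uniquely bleached if for every `j ∈ J(R)` and every unit `u`, the maps
`x ↦ u*x - x*j` and `x ↦ j*x - x*u` are bijective. -/
def IsUniquelyBleached (R : Type*) [Ring R] : Prop :=
  ∀ j ∈ JacobsonRadical R, ∀ u : R, IsUnit u →
    Function.Bijective (fun x : R => u * x - x * j) ∧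
    Function.Bijective (fun x : R => j * x - x * u)


section Quasipolar

variable {T T' : Type*} [Ring T] [Ring T']

theorem IsQuasinilpotent.map {a : T} (h : IsQuasinilpotent a) (f : T ≃+* T') :
    IsQuasinilpotent (f a) := by
  intro x hx
  have hcomm : a * f.symm x = f.symm x * a :=
    f.injective (by simpa only [map_mul, RingEquiv.apply_symm_apply] using hx)
  simpa using (h _ hcomm).map f

theorem IsQuasipolar.map {a : T} (h : IsQuasipolar a) (f : T ≃+* T') : IsQuasipolar (f a) := by
  obtain ⟨p, hp, hcomm, hunit, hqnil⟩ := h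
  refine ⟨f p, hp.map f, fun y hy => ?_, by simpa using hunit.map f, by simpa using hqnil.map f⟩
  have hy' : f.symm y * a = a * f.symm y :=
    f.injective (by simpa only [map_mul, RingEquiv.apply_symm_apply] using hy)
  simpa using congrArg f (hcomm _ hy')

theorem IsQuasipolar.of_isSimilar {a b : T} (h : IsSimilar a b) (hb : IsQuasipolar b) :
    IsQuasipolar a := by
  obtain ⟨u, rfl⟩ := h
  simpa [ConjAct.units_smul_def, mul_assoc] using
    hb.map (MulSemiringAction.toRingEquiv _ T (ConjAct.toConjAct u))

theorem IsSimilar.exists_commute {p e a : T} (h : IsSimilar p e) (hpa : Commute p a) :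
    ∃ b, IsSimilar a b ∧ Commute e b := by
  obtain ⟨u, rfl⟩ := h
  refine ⟨↑u⁻¹ * a * u, ⟨u, rfl⟩, ?_⟩
  simpa [ConjAct.units_smul_def, mul_assoc] using
    hpa.map (MulSemiringAction.toRingEquiv _ T (ConjAct.toConjAct u⁻¹))

theorem IsUnit.isQuasipolar {a : T} (h : IsUnit a) : IsQuasipolar a :=
  ⟨0, .zero, fun _ _ => by simp, by simpa using h, fun _ _ => by simp⟩

theorem IsQuasinilpotent.isQuasipolar {a : T} (h : IsQuasinilpotent a) : IsQuasipolar a :=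
  ⟨1, .one, fun _ _ => by simp, by simpa [add_comm] using h 1 (by simp), by simpa using h⟩

theorem IsIdempotentElem.isSimilar_of_isUnit {p e : T} (hp : IsIdempotentElem p)
    (he : IsIdempotentElem e) (hu : IsUnit (e * p + (1 - e) * (1 - p))) : IsSimilar p e := by
  obtain ⟨u, hu⟩ := hu
  have hintertwine : ↑u * p = e * u := by
    rw [hu]
    simp only [add_mul, mul_add, sub_mul, mul_sub, one_mul, mul_one, mul_assoc, hp.eq]
    simp only [← mul_assoc, he.eq]
    abel
  refine ⟨u⁻¹, ?_⟩
  rw [inv_inv, hintertwine, mul_assoc, Units.mul_inv, mul_one]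

end Quasipolar

namespace IsLocalRing

variable {R : Type*} [Ring R]

open scoped Classical in
noncomputable def spectralIdempotent (a : R) : R := if IsUnit a then 0 else 1

theorem isIdempotentElem_spectralIdempotent (a : R) : IsIdempotentElem (spectralIdempotent a) := by
  unfold spectralIdempotent; split_ifs <;> simp [IsIdempotentElem]

theorem commute_spectralIdempotent (a x : R) : Commute (spectralIdempotent a) x := by
  unfold spectralIdempotent; split_ifs <;> simp

theorem spectralIdempotent_congr {a b : R} (h : IsUnit a ↔ IsUnit b) :
    spectralIdempotent a = spectralIdempotent b := by
  unfold spectralIdempotent; split_ifs <;> simp_all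

variable [IsLocalRing R]

theorem eq_zero_or_eq_one_of_isIdempotentElem {e : R} (he : IsIdempotentElem e) :
    e = 0 ∨ e = 1 := by
  rcases isUnit_or_isUnit_of_add_one (add_sub_cancel e 1) with h | h
  · exact .inr ((IsIdempotentElem.iff_eq_one_of_isUnit h).mp he)
  · exact .inl (sub_eq_self.mp ((IsIdempotentElem.iff_eq_one_of_isUnit h).mp he.one_sub))

instance isDedekindFiniteMonoid : IsDedekindFiniteMonoid R where
  mul_eq_one_symm {a b} hab := by
    have hba : IsIdempotentElem (b * a) := by
      rw [IsIdempotentElem, mul_assoc, ← mul_assoc a, hab, one_mul]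
    refine (eq_zero_or_eq_one_of_isIdempotentElem hba).resolve_left fun h =>
      one_ne_zero (?_ : (1 : R) = 0)
    calc (1 : R) = a * b * (a * b) := by rw [hab, one_mul]
      _ = a * (b * a) * b := by simp only [mul_assoc]
      _ = 0 := by rw [h, mul_zero, zero_mul]

theorem isUnit_add_of_not_isUnit {u j : R} (hu : IsUnit u) (hj : ¬IsUnit j) : IsUnit (u + j) :=
  (isUnit_or_isUnit_of_isUnit_add (b := -j) (by simpa using hu)).resolve_right
    (by rwa [IsUnit.neg_iff])

theorem isUnit_sub_of_not_isUnit {u j : R} (hu : IsUnit u) (hj : ¬IsUnit j) :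
    IsUnit (u - j) := by
  rw [sub_eq_add_neg]
  exact isUnit_add_of_not_isUnit hu (by rwa [IsUnit.neg_iff])

theorem not_isUnit_mul_left {x : R} (hx : ¬IsUnit x) (y : R) : ¬IsUnit (y * x) :=
  fun h => hx (isUnit_of_mul_isUnit_right h)

theorem not_isUnit_mul_right {x : R} (hx : ¬IsUnit x) (y : R) : ¬IsUnit (x * y) :=
  fun h => hx (isUnit_of_mul_isUnit_left h)

theorem mem_jacobsonRadical {a : R} (ha : ¬IsUnit a) : a ∈ JacobsonRadical R := by
  refine Ideal.mem_jacobson_iff.mpr fun y => ?_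
  obtain ⟨z, hz⟩ :=
    (isUnit_add_of_not_isUnit isUnit_one (not_isUnit_mul_left ha y)).exists_left_inv
  exact ⟨z, by rw [Ideal.mem_bot, ← hz]; noncomm_ring⟩

theorem isUnit_add_spectralIdempotent (a : R) : IsUnit (a + spectralIdempotent a) := by
  unfold spectralIdempotent; split_ifs with h
  · simpa using h
  · simpa [add_comm] using isUnit_add_of_not_isUnit isUnit_one h

theorem not_isUnit_mul_spectralIdempotent (a : R) : ¬IsUnit (a * spectralIdempotent a) := by
  unfold spectralIdempotent; split_ifs with h
  · simp
  · simpa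

end IsLocalRing

theorem IsUniquelyBleached.eq_zero_of_mul_eq_mul {R : Type*} [Ring R] [IsLocalRing R]
    (hR : IsUniquelyBleached R) {a b x : R} (hab : Xor (IsUnit a) (IsUnit b))
    (h : a * x = x * b) : x = 0 := by
  rcases hab with ⟨ha, hb⟩ | ⟨hb, ha⟩
  · exact (hR b (IsLocalRing.mem_jacobsonRadical hb) a ha).1.injective (by simp [h])
  · exact (hR a (IsLocalRing.mem_jacobsonRadical ha) b hb).2.injective (by simp [h])

namespace GenMatrix

section Mul

variable {R : Type*} [Ring R] {s : R}

@[simp] lemma sub_a (X Y : GenMatrix R s) : (X - Y).a = X.a - Y.a := by simp [sub_eq_add_neg]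
@[simp] lemma sub_b (X Y : GenMatrix R s) : (X - Y).b = X.b - Y.b := by simp [sub_eq_add_neg]
@[simp] lemma sub_c (X Y : GenMatrix R s) : (X - Y).c = X.c - Y.c := by simp [sub_eq_add_neg]
@[simp] lemma sub_d (X Y : GenMatrix R s) : (X - Y).d = X.d - Y.d := by simp [sub_eq_add_neg]

@[simps]
def diag (a b : R) : GenMatrix R s := ⟨a, 0, 0, b⟩

@[simp] lemma diag_one : (diag 1 1 : GenMatrix R s) = 1 := rfl

lemma diag_add_diag (a b a' b' : R) :
    (diag a b + diag a' b' : GenMatrix R s) = diag (a + a') (b + b') := by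
  ext <;> simp

lemma diag_mul_diag (a b a' b' : R) :
    (diag a b * diag a' b' : GenMatrix R s) = diag (a * a') (b * b') := by
  ext <;> simp

lemma eq_diag_of_commute {X : GenMatrix R s} (h : Commute (diag 1 0) X) : X = diag X.a X.d := by
  have hb : X.b = 0 := by simpa using congrArg GenMatrix.b h.eq
  have hc : X.c = 0 := by simpa using (congrArg GenMatrix.c h.eq).symm
  ext <;> simp [hb, hc]

end Mul

section Local

variable {R : Type*} [Ring R] [IsLocalRing R] {s : R}

lemma eq_zero_of_isIdempotentElem (hR : IsUniquelyBleached R) {p : GenMatrix R s}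
    (hp : IsIdempotentElem p) (ha : ¬IsUnit p.a) (hd : ¬IsUnit p.d) : p = 0 := by
  have e2 : p.a * p.b + p.b * p.d = p.b := congrArg GenMatrix.b hp.eq
  have e3 : p.c * p.a + p.d * p.c = p.c := congrArg GenMatrix.c hp.eq
  have hb : p.b = 0 :=
    hR.eq_zero_of_mul_eq_mul (.inr ⟨IsLocalRing.isUnit_sub_of_not_isUnit isUnit_one hd, ha⟩)
      (by rw [mul_sub, mul_one, eq_sub_iff_add_eq, e2])
  have hc : p.c = 0 :=
    hR.eq_zero_of_mul_eq_mul (.inr ⟨IsLocalRing.isUnit_sub_of_not_isUnit isUnit_one ha, hd⟩)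
      (by rw [mul_sub, mul_one, eq_sub_iff_add_eq, add_comm, e3])
  have hpa : IsIdempotentElem p.a := by
    simpa [IsIdempotentElem, hb] using congrArg GenMatrix.a hp.eq
  have hpd : IsIdempotentElem p.d := by
    simpa [IsIdempotentElem, hc] using congrArg GenMatrix.d hp.eq
  have ha0 := (IsLocalRing.eq_zero_or_eq_one_of_isIdempotentElem hpa).resolve_right
    fun h => ha (h ▸ isUnit_one)
  have hd0 := (IsLocalRing.eq_zero_or_eq_one_of_isIdempotentElem hpd).resolve_right
    fun h => hd (h ▸ isUnit_one)
  ext <;> simp [ha0, hb, hc, hd0]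

end Local

variable {R : Type*} [Ring R] {s : R} [Fact (s ∈ Set.center R)]

lemma isUnit_diag {a b : R} (ha : IsUnit a) (hb : IsUnit b) :
    IsUnit (diag a b : GenMatrix R s) :=
  ⟨⟨diag a b, diag ↑ha.unit⁻¹ ↑hb.unit⁻¹, by simp [diag_mul_diag], by simp [diag_mul_diag]⟩,
    rfl⟩

lemma isUnit_lower (l : R) : IsUnit (⟨1, 0, l, 1⟩ : GenMatrix R s) :=
  ⟨⟨_, ⟨1, 0, -l, 1⟩, by ext <;> simp, by ext <;> simp⟩, rfl⟩

lemma isUnit_upper (m : R) : IsUnit (⟨1, m, 0, 1⟩ : GenMatrix R s) :=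
  ⟨⟨_, ⟨1, -m, 0, 1⟩, by ext <;> simp, by ext <;> simp⟩, rfl⟩

lemma isUnit_of_isUnit_schur (X : GenMatrix R s) (u : Rˣ) (hu : ↑u = X.a)
    (h : IsUnit (X.d - s * (X.c * (↑u⁻¹ * X.b)))) : IsUnit X := by
  have hLDU : X = ⟨1, 0, X.c * ↑u⁻¹, 1⟩ * diag X.a (X.d - s * (X.c * (↑u⁻¹ * X.b))) *
      ⟨1, ↑u⁻¹ * X.b, 0, 1⟩ := by
    ext <;> simp [mul_assoc, ← hu]
  rw [hLDU]
  exact ((isUnit_lower _).mul (isUnit_diag (hu ▸ u.isUnit) h)).mul (isUnit_upper _)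

lemma isSimilar_diag_one_zero {p : GenMatrix R s} (hp : IsIdempotentElem p) (ha : IsUnit p.a)
    (hd : IsUnit (1 - p.d)) : IsSimilar p (diag 1 0) := by
  have e3 : p.c * p.a + p.d * p.c = p.c := congrArg GenMatrix.c hp.eq
  have e4 : s * (p.c * p.b) + p.d * p.d = p.d := congrArg GenMatrix.d hp.eq
  obtain ⟨u, hu⟩ := ha
  obtain ⟨v, hv⟩ := hd
  have hcu : p.c * ↑u⁻¹ = ↑v⁻¹ * p.c := by
    rw [Units.mul_inv_eq_iff_eq_mul, mul_assoc, Units.eq_inv_mul_iff_mul_eq, hu, hv, sub_mul,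
      one_mul]
    exact sub_eq_iff_eq_add.mpr e3.symm
  have hschur : s * (p.c * (↑u⁻¹ * p.b)) = p.d :=
    calc s * (p.c * (↑u⁻¹ * p.b)) = ↑v⁻¹ * (s * (p.c * p.b)) := by
          rw [← mul_assoc p.c, hcu, mul_assoc, sshift (s := s)]
      _ = ↑v⁻¹ * ((1 - p.d) * p.d) := by rw [eq_sub_of_add_eq e4, sub_mul, one_mul]
      _ = p.d := by rw [← hv, Units.inv_mul_cancel_left]
  refine hp.isSimilar_of_isUnit (by simp [IsIdempotentElem, diag_mul_diag]) ?_
  refine isUnit_of_isUnit_schur _ u (by simp [hu]) ?_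
  simp [hschur]

variable [IsLocalRing R]

open IsLocalRing

lemma isUnit_of_not_isUnit_b {X : GenMatrix R s} (ha : IsUnit X.a) (hd : IsUnit X.d)
    (hb : ¬IsUnit X.b) : IsUnit X := by
  obtain ⟨u, hu⟩ := ha
  exact isUnit_of_isUnit_schur X u hu <| isUnit_sub_of_not_isUnit hd <|
    not_isUnit_mul_left (not_isUnit_mul_left (not_isUnit_mul_left hb _) _) _

lemma isQuasinilpotent_diag {a b : R} (ha : ¬IsUnit a) (hb : ¬IsUnit b) :
    IsQuasinilpotent (diag a b : GenMatrix R s) := fun X _ =>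
  isUnit_of_not_isUnit_b
    (by simpa using isUnit_add_of_not_isUnit isUnit_one (not_isUnit_mul_right ha X.a))
    (by simpa using isUnit_add_of_not_isUnit isUnit_one (not_isUnit_mul_right hb X.d))
    (by simpa using not_isUnit_mul_right ha X.b)

lemma isSimilar_diag_one_zero_or (hR : IsUniquelyBleached R) {p : GenMatrix R s}
    (hp : IsIdempotentElem p) (h0 : p ≠ 0) (h1 : p ≠ 1) :
    IsSimilar p (diag 1 0) ∨ IsSimilar (1 - p) (diag 1 0) := by
  by_cases hpa : IsUnit p.a ∧ IsUnit (1 - p.d)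
  · exact .inl (isSimilar_diag_one_zero hp hpa.1 hpa.2)
  by_cases hqa : IsUnit (1 - p.a) ∧ IsUnit p.d
  · exact .inr <|
      isSimilar_diag_one_zero hp.one_sub (by simpa using hqa.1) (by simpa using hqa.2)
  exfalso
  by_cases ha : IsUnit p.a
  · have hd' : ¬IsUnit (1 - p.d) := fun h => hpa ⟨ha, h⟩
    have ha' : ¬IsUnit (1 - p.a) := fun h =>
      hqa ⟨h, (isUnit_or_isUnit_of_add_one (add_sub_cancel p.d 1)).resolve_right hd'⟩
    exact h1 (sub_eq_zero.mp (eq_zero_of_isIdempotentElem hR hp.one_sub (by simpa using ha')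
      (by simpa using hd'))).symm
  · have hd : ¬IsUnit p.d := fun h => hqa ⟨isUnit_sub_of_not_isUnit isUnit_one ha, h⟩
    exact h0 (eq_zero_of_isIdempotentElem hR hp ha hd)

lemma isQuasipolar_diag (hR : IsUniquelyBleached R) (a b : R) :
    IsQuasipolar (diag a b : GenMatrix R s) := by
  refine ⟨diag (spectralIdempotent a) (spectralIdempotent b), ?_, fun y hy => ?_, ?_, ?_⟩
  · simp [IsIdempotentElem, diag_mul_diag, (isIdempotentElem_spectralIdempotent _).eq]
  · by_cases hab : Xor (IsUnit a) (IsUnit b)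
    · have hb : y.b = 0 :=
        hR.eq_zero_of_mul_eq_mul hab (by simpa using (congrArg GenMatrix.b hy).symm)
      have hc : y.c = 0 :=
        hR.eq_zero_of_mul_eq_mul (Or.symm hab) (by simpa using (congrArg GenMatrix.c hy).symm)
      ext <;> simp [hb, hc, (commute_spectralIdempotent _ _).eq]
    · rw [spectralIdempotent_congr ((not_xor _ _).mp hab)]
      ext <;> simp [(commute_spectralIdempotent _ _).eq]
  · rw [diag_add_diag]
    exact isUnit_diag (isUnit_add_spectralIdempotent a) (isUnit_add_spectralIdempotent b)
  · rw [diag_mul_diag]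
    exact isQuasinilpotent_diag (not_isUnit_mul_spectralIdempotent a)
      (not_isUnit_mul_spectralIdempotent b)

lemma isUnit_or_isQuasinilpotent_or_isSimilar_diag_of_isQuasipolar (hR : IsUniquelyBleached R)
    {A : GenMatrix R s} (h : IsQuasipolar A) :
    IsUnit A ∨ IsQuasinilpotent A ∨ ∃ a b : R, IsSimilar A (diag a b) := by
  obtain ⟨p, hp, hcomm, hunit, hqnil⟩ := h
  by_cases h0 : p = 0
  · subst h0
    exact .inl (by simpa using hunit)
  by_cases h1 : p = 1
  · subst h1
    exact .inr (.inl (by simpa using hqnil))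
  have hpA : Commute p A := hcomm A rfl
  obtain ⟨q, hq, hqA⟩ : ∃ q, IsSimilar q (diag 1 0) ∧ Commute q A :=
    (isSimilar_diag_one_zero_or hR hp h0 h1).elim (fun h => ⟨p, h, hpA⟩)
      (fun h => ⟨1 - p, h, (Commute.one_left A).sub_left hpA⟩)
  obtain ⟨B, hAB, hB⟩ := hq.exists_commute hqA
  exact .inr (.inr ⟨B.a, B.d, eq_diag_of_commute hB ▸ hAB⟩)

end GenMatrix

/-- over a uniquely bleached local ring `R` with `s` central, `A ∈ K_s(R)` is
quasipolar iff `A` is a unit, or `A` is quasinilpotent, or `A` is similar to a diagonal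
matrix `[[a,0],[0,b]]`. -/
theorem genMatrix_isQuasipolar_iff_unit_or_qnil_or_similar_diagonal {R : Type*} [Ring R]
    [IsLocalRing R] (hR : IsUniquelyBleached R) (s : R) [Fact (s ∈ Set.center R)]
    (A : GenMatrix R s) :
    IsQuasipolar A ↔
      IsUnit A ∨ IsQuasinilpotent A ∨
        ∃ a b : R, IsSimilar A (⟨a, 0, 0, b⟩ : GenMatrix R s) := by
  refine ⟨GenMatrix.isUnit_or_isQuasinilpotent_or_isSimilar_diag_of_isQuasipolar hR, ?_⟩
  rintro (hA | hA | ⟨a, b, hAB⟩)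
  · exact hA.isQuasipolar
  · exact hA.isQuasipolar
  · exact .of_isSimilar hAB (GenMatrix.isQuasipolar_diag hR a b)
end

section
/- Let R be a commutative local ring and s ∈ R. Then every upper triangular matrix [[a,b],[0,c]] in K_s(R) is quasipolar in K_s(R). -/
/-!
Write `A = [[a, b], [0, c]]`. In a local ring each diagonal entry is either a unit or lies in
the Jacobson radical, and `p` is taken upper triangular with diagonal entry `0` against a unit
and `1` against a radical element, so that `A + p` has unit diagonal and `A * p` has radical
diagonal. An upper triangular matrix with unit diagonal has unit `det_s`, hence is invertible;
one with radical diagonal is quasinilpotent, because `det_s (1 + A * p * Y) ≡ 1` modulo the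
radical whenever `Y` commutes with `A * p`. The choices `p = 0` and `p = 1` commute with
everything; in the mixed cases `a - c` is a unit `v⁻¹`, every matrix commuting with `A` is then
upper triangular, and the idempotent `[[1, v * b], [0, 0]]` (or its complement) commutes with it.
-/

namespace GenMatrix

section CommRing

variable {R : Type*} [CommRing R] {s : R}

lemma isUnit_of_isUnit_dets {X : GenMatrix R s} (h : IsUnit X.dets) : IsUnit X := by
  obtain ⟨v, hv⟩ := h.exists_left_inv
  unfold dets at hv
  refine isUnit_iff_exists.mpr ⟨⟨v * X.d, -(v * X.b), -(v * X.c), v * X.a⟩, ?_, ?_⟩ <;>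
    ext <;> simp only [mul_a, mul_b, mul_c, mul_d, one_a, one_b, one_c, one_d] <;>
    first | ring1 | linear_combination hv

lemma isUnit_upperTriangular {a b c : R} (ha : IsUnit a) (hc : IsUnit c) :
    IsUnit (⟨a, b, 0, c⟩ : GenMatrix R s) :=
  isUnit_of_isUnit_dets <| by simpa [dets] using ha.mul hc

lemma isQuasinilpotent_upperTriangular {a b c : R} (ha : a ∈ JacobsonRadical R)
    (hc : c ∈ JacobsonRadical R) : IsQuasinilpotent (⟨a, b, 0, c⟩ : GenMatrix R s) := by
  intro Y hY
  have hYa : a * Y.a + s * (b * Y.c) = Y.a * a := by simpa using congrArg GenMatrix.a hY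
  -- The (1,1) entry of `A * Y = Y * A` absorbs `s * b * Y.c`, which need not lie in the radical.
  set m := a * (Y.a * (1 + c * Y.d)) + c * (Y.d - s * ((a * Y.b + b * Y.d) * Y.c))
  have hdets : (1 + (⟨a, b, 0, c⟩ : GenMatrix R s) * Y).dets = m * 1 + 1 := by
    simp only [dets, add_a, add_b, add_c, add_d, mul_a, mul_b, mul_c, mul_d,
      one_a, one_b, one_c, one_d, m]
    linear_combination (1 + c * Y.d) * hYa
  have hm : m ∈ JacobsonRadical R :=
    add_mem (Ideal.mul_mem_right _ _ ha) (Ideal.mul_mem_right _ _ hc)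
  exact isUnit_of_isUnit_dets (hdets ▸ Ideal.mem_jacobson_bot.mp hm 1)

lemma isIdempotentElem_mk_one_zero_zero (x : R) :
    IsIdempotentElem (⟨1, x, 0, 0⟩ : GenMatrix R s) := by
  ext <;> simp

lemma one_sub_mk_one_zero_zero (x : R) :
    1 - (⟨1, x, 0, 0⟩ : GenMatrix R s) = ⟨0, -x, 0, 1⟩ := by
  ext <;> simp [sub_eq_add_neg]

lemma mk_one_zero_zero_mem_centralizer_centralizer {a b c v : R} (hv : v * (a - c) = 1) :
    (⟨1, v * b, 0, 0⟩ : GenMatrix R s) ∈ Subring.centralizer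
      (Subring.centralizer {(⟨a, b, 0, c⟩ : GenMatrix R s)} : Set (GenMatrix R s)) := by
  rw [Subring.mem_centralizer_iff]
  intro y hy
  have hyA := (Subring.mem_centralizer_iff.mp hy) _ rfl
  have hb : a * y.b + b * y.d = y.a * b + y.b * c := by simpa using congrArg GenMatrix.b hyA
  have hc : c * y.c = y.c * a := by simpa using congrArg GenMatrix.c hyA
  have hyc : y.c = 0 := by linear_combination -y.c * hv - v * hc
  ext <;> simp only [mul_a, mul_b, mul_c, mul_d, hyc]
  · ring
  · linear_combination y.b * hv - v * hb
  · ring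
  · ring

lemma isQuasipolar_upperTriangular_of_idempotent {a b c : R} {p : GenMatrix R s}
    (hp : IsIdempotentElem p)
    (hpA : p ∈ Subring.centralizer
      (Subring.centralizer {(⟨a, b, 0, c⟩ : GenMatrix R s)} : Set (GenMatrix R s)))
    (hpc : p.c = 0) (hua : IsUnit (a + p.a)) (hud : IsUnit (c + p.d))
    (hja : a * p.a ∈ JacobsonRadical R) (hjd : c * p.d ∈ JacobsonRadical R) :
    IsQuasipolar (⟨a, b, 0, c⟩ : GenMatrix R s) := by
  refine ⟨p, hp, fun y hy => ?_, ?_, ?_⟩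
  · have hyA : y ∈ Subring.centralizer {(⟨a, b, 0, c⟩ : GenMatrix R s)} :=
      Subring.mem_centralizer_iff.mpr fun _ hA => hA ▸ hy.symm
    exact (Subring.mem_centralizer_iff.mp hpA y hyA).symm
  · have hsum : (⟨a, b, 0, c⟩ : GenMatrix R s) + p = ⟨a + p.a, b + p.b, 0, c + p.d⟩ := by
      ext <;> simp [hpc]
    exact hsum ▸ isUnit_upperTriangular hua hud
  · have hprod : (⟨a, b, 0, c⟩ : GenMatrix R s) * p =
        ⟨a * p.a, a * p.b + b * p.d, 0, c * p.d⟩ := by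
      ext <;> simp [hpc]
    exact hprod ▸ isQuasinilpotent_upperTriangular hja hjd

end CommRing

end GenMatrix

namespace IsLocalRing

variable {R : Type*} [CommRing R] [IsLocalRing R]

lemma mem_jacobsonRadical_of_not_isUnit {x : R} (hx : ¬IsUnit x) : x ∈ JacobsonRadical R := by
  rw [JacobsonRadical, jacobson_eq_maximalIdeal _ bot_ne_top]
  exact hx

lemma isUnit_add_one_of_not_isUnit {x : R} (hx : ¬IsUnit x) : IsUnit (x + 1) := by
  simpa using Ideal.mem_jacobson_bot.mp (mem_jacobsonRadical_of_not_isUnit hx) 1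

lemma isUnit_sub_of_isUnit_of_not_isUnit {a c : R} (ha : IsUnit a) (hc : ¬IsUnit c) :
    IsUnit (a - c) :=
  (isUnit_or_isUnit_of_isUnit_add (by simpa using ha)).resolve_right hc

end IsLocalRing

open GenMatrix IsLocalRing in
/-- over a commutative local ring `R`, every upper triangular matrix
`[[a,b],[0,c]]` of `K_s(R)` is quasipolar. -/
theorem genMatrix_upperTriangular_isQuasipolar {R : Type*} [CommRing R] [IsLocalRing R]
    (s a b c : R) :
    IsQuasipolar (⟨a, b, 0, c⟩ : GenMatrix R s) := by
  by_cases ha : IsUnit a <;> by_cases hc : IsUnit c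
  · exact isQuasipolar_upperTriangular_of_idempotent (p := 0) .zero (zero_mem _) rfl
      (by simpa) (by simpa) (by simp) (by simp)
  · obtain ⟨v, hv⟩ := (isUnit_sub_of_isUnit_of_not_isUnit ha hc).exists_left_inv
    have hp := one_sub_mk_one_zero_zero (s := s) (v * b)
    exact isQuasipolar_upperTriangular_of_idempotent (p := ⟨0, -(v * b), 0, 1⟩)
      (hp ▸ (isIdempotentElem_mk_one_zero_zero _).one_sub)
      (hp ▸ sub_mem (one_mem _) (mk_one_zero_zero_mem_centralizer_centralizer hv)) rfl
      (by simpa) (by simpa using isUnit_add_one_of_not_isUnit hc)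
      (by simp) (by simpa using mem_jacobsonRadical_of_not_isUnit hc)
  · obtain ⟨v, hv⟩ := (isUnit_sub_of_isUnit_of_not_isUnit hc ha).exists_left_inv
    exact isQuasipolar_upperTriangular_of_idempotent (p := ⟨1, -v * b, 0, 0⟩)
      (isIdempotentElem_mk_one_zero_zero _)
      (mk_one_zero_zero_mem_centralizer_centralizer (by linear_combination hv)) rfl
      (by simpa using isUnit_add_one_of_not_isUnit ha) (by simpa)
      (by simpa using mem_jacobsonRadical_of_not_isUnit ha) (by simp)
  · exact isQuasipolar_upperTriangular_of_idempotent (p := 1) .one (one_mem _) rfl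
      (by simpa using isUnit_add_one_of_not_isUnit ha)
      (by simpa using isUnit_add_one_of_not_isUnit hc)
      (by simpa using mem_jacobsonRadical_of_not_isUnit ha)
      (by simpa using mem_jacobsonRadical_of_not_isUnit hc)
end

section
/- Let R be a commutative local ring, s ∈ R, and let A ∈ K_s(R) satisfy det_s(A) ∈ J(R). Then tr(A) ∈ J(R) if and only if A is quasinilpotent in K_s(R). -/
/-!
Over a commutative ring, a generalized matrix `M` is a unit exactly when `det_s M` is (via the
adjugate), `det_s` is multiplicative, and `det_s (1 + M) = 1 + tr M + det_s M`.

If `tr A` and `det_s A` lie in `J(R)` and `X` commutes with `A`, then `(AX)² = A² X²`, and the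
Cayley–Hamilton identity `A² = tr A • A - det_s A • 1` puts `tr ((AX)²)` in `J(R)`; hence
`tr (AX)² = tr ((AX)²) + 2 det_s (AX) ∈ J(R)`, so `tr (AX) ∈ J(R)` because `J(R)` is radical,
and `det_s (1 + AX) ∈ 1 + J(R)` is a unit. Conversely, testing quasinilpotence of `A` against the
scalar matrices `y • 1` shows that `1 + y tr A + y² det_s A` is a unit for every `y`, hence so is
`1 + y tr A`.
-/

open Ideal

lemma isUnit_of_isUnit_add_of_mem_jacobson_bot {R : Type*} [CommRing R] {x j : R}
    (hj : j ∈ jacobson (⊥ : Ideal R)) (h : IsUnit (x + j)) : IsUnit x := by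
  obtain ⟨u, hu⟩ := h
  have hx : x = u * (j * -↑u⁻¹ + 1) := by linear_combination j * u.mul_inv - hu
  rw [hx]
  exact u.isUnit.mul (mem_jacobson_bot.mp hj _)

namespace GenMatrix

variable {R : Type*} [CommRing R] {s : R}

def scalar (r : R) : GenMatrix R s := ⟨r, 0, 0, r⟩

def adjugate (M : GenMatrix R s) : GenMatrix R s := ⟨M.d, -M.b, -M.c, M.a⟩

lemma scalar_commute (r : R) (M : GenMatrix R s) : Commute (scalar r) M := by
  ext <;> simp only [scalar, mul_a, mul_b, mul_c, mul_d] <;> ring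

lemma scalar_mul_scalar (a b : R) : scalar a * scalar b = (scalar (a * b) : GenMatrix R s) := by
  ext <;> simp [scalar]

lemma scalar_one : (scalar 1 : GenMatrix R s) = 1 := rfl

lemma mul_adjugate (M : GenMatrix R s) : M * adjugate M = scalar (dets M) := by
  ext <;> simp only [adjugate, scalar, dets, mul_a, mul_b, mul_c, mul_d] <;> ring

lemma adjugate_mul (M : GenMatrix R s) : adjugate M * M = scalar (dets M) := by
  ext <;> simp only [adjugate, scalar, dets, mul_a, mul_b, mul_c, mul_d] <;> ring

lemma dets_mul (M N : GenMatrix R s) : dets (M * N) = dets M * dets N := by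
  simp only [dets, mul_a, mul_b, mul_c, mul_d]; ring

lemma dets_one : dets (1 : GenMatrix R s) = 1 := by simp [dets]

lemma dets_scalar (r : R) : dets (scalar r : GenMatrix R s) = r ^ 2 := by
  simp [dets, scalar, sq]

lemma dets_one_add (M : GenMatrix R s) : dets (1 + M) = 1 + tr M + dets M := by
  simp only [dets, tr, add_a, add_b, add_c, add_d, one_a, one_b, one_c, one_d]; ring

lemma tr_mul_scalar (M : GenMatrix R s) (r : R) : tr (M * scalar r) = tr M * r := by
  simp only [tr, scalar, mul_a, mul_d]; ring

lemma sq_tr (M : GenMatrix R s) : tr M ^ 2 = tr (M * M) + 2 * dets M := by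
  simp only [tr, dets, mul_a, mul_d]; ring

lemma tr_mul_self_mul (A Y : GenMatrix R s) :
    tr (A * A * Y) = tr A * tr (A * Y) - dets A * tr Y := by
  simp only [tr, dets, mul_a, mul_b, mul_c, mul_d]; ring

lemma isUnit_iff_isUnit_dets (M : GenMatrix R s) : IsUnit M ↔ IsUnit (dets M) := by
  constructor
  · rintro ⟨u, rfl⟩
    refine IsUnit.of_mul_eq_one (dets (↑u⁻¹ : GenMatrix R s)) ?_
    rw [← dets_mul, u.mul_inv, dets_one]
  · rintro ⟨u, hu⟩
    have hinv : scalar (dets M) * scalar (↑u⁻¹ : R) = (1 : GenMatrix R s) := by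
      rw [scalar_mul_scalar, ← hu, u.mul_inv, scalar_one]
    refine ⟨⟨M, adjugate M * scalar (↑u⁻¹ : R), ?_, ?_⟩, rfl⟩
    · rw [← mul_assoc, mul_adjugate, hinv]
    · rw [(scalar_commute _ _).right_comm, adjugate_mul, hinv]

lemma isUnit_one_add_of_mem_jacobson_bot {M : GenMatrix R s} (htr : tr M ∈ jacobson ⊥)
    (hdet : dets M ∈ jacobson ⊥) : IsUnit (1 + M) := by
  rw [isUnit_iff_isUnit_dets]
  refine isUnit_of_sub_one_mem_jacobson_bot _ ?_
  rw [dets_one_add, add_assoc, add_sub_cancel_left]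
  exact add_mem htr hdet

lemma tr_mul_mem_jacobson_bot_of_commute {A X : GenMatrix R s} (htr : tr A ∈ jacobson ⊥)
    (hdet : dets A ∈ jacobson ⊥) (hAX : Commute A X) : tr (A * X) ∈ jacobson ⊥ := by
  have hsq : tr (A * X) ^ 2 ∈ jacobson ⊥ := by
    rw [sq_tr, hAX.symm.mul_mul_mul_comm, tr_mul_self_mul, dets_mul]
    exact add_mem (sub_mem (mul_mem_right _ _ htr) (mul_mem_right _ _ hdet))
      (mul_mem_left _ _ (mul_mem_right _ _ hdet))
  exact isRadical_jacobson ⊥ ⟨2, hsq⟩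

end GenMatrix

open GenMatrix in
theorem genMatrix_tr_mem_jacobson_iff_isQuasinilpotent_general {R : Type*} [CommRing R]
    (s : R) (A : GenMatrix R s)
    (hdet : GenMatrix.dets A ∈ JacobsonRadical R) :
    GenMatrix.tr A ∈ JacobsonRadical R ↔ IsQuasinilpotent A := by
  constructor
  · intro htr X hAX
    refine isUnit_one_add_of_mem_jacobson_bot (tr_mul_mem_jacobson_bot_of_commute htr hdet hAX) ?_
    rw [dets_mul]
    exact mul_mem_right _ _ hdet
  · intro hq
    refine mem_jacobson_bot.mpr fun y => ?_
    have hunit := (isUnit_iff_isUnit_dets _).mp (hq (scalar y) (scalar_commute y A).symm)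
    rw [dets_one_add, dets_mul, tr_mul_scalar, dets_scalar,
      show 1 + tr A * y + dets A * y ^ 2 = tr A * y + 1 + dets A * y ^ 2 by ring] at hunit
    exact isUnit_of_isUnit_add_of_mem_jacobson_bot (mul_mem_right _ _ hdet) hunit

/-- over a commutative local ring `R`, if `A ∈ K_s(R)` has `det_s(A) ∈ J(R)`,
then `tr(A) ∈ J(R)` iff `A` is quasinilpotent in `K_s(R)`. -/
theorem genMatrix_tr_mem_jacobson_iff_isQuasinilpotent {R : Type*} [CommRing R]
    [IsLocalRing R] (s : R) (A : GenMatrix R s)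
    (hdet : GenMatrix.dets A ∈ JacobsonRadical R) :
    GenMatrix.tr A ∈ JacobsonRadical R ↔ IsQuasinilpotent A :=
  genMatrix_tr_mem_jacobson_iff_isQuasinilpotent_general s A hdet
end
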